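/- arXiv:1707.04822 — 3 statements merged into one kernel-verified Lean document; each statement's English description precedes it below -/
import Mathlib

section
/- AdaGradBNG convergence (Theorem 1, second inequality). Let F(·,ξ) be convex and differentiable in x for every ξ, and let f(x) = E_ξ[F(x,ξ)]. Run the AdaGrad with Block-Normalized Gradient algorithm for T iterations with i.i.d. samples ξ_1,…,ξ_T, parameters η > 0, δ > 0, and deterministic initial point x_1. Suppose that almost surely every block gradient is nonzero, ‖F_i'(x_t,ξ_t)‖₂ ≤ M_i for all t and i, and ‖x_t − x*‖_∞ ≤ D_∞ for all t, for some fixed point x* ∈ R^d and constants M_i, D_∞ > 0. Then the averaged iterate x̄_T = (1/T)∑_{t=1}^T x_t satisfies E[f(x̄_T) − f(x*)] ≤ E[‖x_1 − x*‖²_{H_1}]/(2ηT) + D_∞²√(Bd)/(2η√T) + ∑_{i=1}^B η M_i² √(d_i)/√T. -/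
/-!
Pathwise, convexity bounds the regret `∑ₜ F(xₜ,ξₜ) − F(x*,ξₜ)` by the linearized regret
`∑ₜ ⟨F'(xₜ,ξₜ), xₜ − x*⟩`, which splits over coordinates. In one coordinate, with weight
`aₜ = δ + sₜ`, the update gives
`Gₜ (xₜ − x*) = aₜ ((xₜ − x*)² − (xₜ₊₁ − x*)²) / (2η) + η Gₜ² / (2 aₜ)`.
Abel summation with nondecreasing weights and `|xₜ − x*| ≤ D∞` bounds the first sum by
`a₁ (x₁ − x*)² + D∞² s_T`, and `∑ₜ gₜ² / (δ + √(g₁² + ⋯ + gₜ²)) ≤ 2 √(g₁² + ⋯ + g_T²)`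
bounds the second by `2 M² s_T`. Block normalization makes every block of `gₜ` a unit vector,
so the squared row norms of each block add up to `T`, and Cauchy–Schwarz turns `∑ s_T` into
`√(Bd) √T` and `√(dᵢ) √T`. Finally `xₜ` depends only on `ξ₁, …, ξₜ₋₁`, hence is independent
of `ξₜ` and `E F(xₜ,ξₜ) = E f(xₜ)`; Jensen's inequality for the convex `f` at the averaged
iterate converts the expected regret into the bound.
-/

open MeasureTheory ProbabilityTheory

/-- Euclidean norm of the `i`-th block of a vector in `ℝ^d`, where `ℝ^d` is
partitioned into `B` blocks of sizes `dsz 1, …, dsz B` (coordinates are indexed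
by pairs `⟨i, j⟩` with `i` the block index). -/
noncomputable def blockNorm {B : ℕ} {dsz : Fin B → ℕ} (i : Fin B)
    (v : EuclideanSpace ℝ ((i : Fin B) × Fin (dsz i))) : ℝ :=
  Real.sqrt (∑ j : Fin (dsz i), v ⟨i, j⟩ ^ 2)

open Finset Function

theorem ConvexOn.sub_le_inner_gradient {E : Type*} [NormedAddCommGroup E]
    [InnerProductSpace ℝ E] [CompleteSpace E] {s : Set E} {φ : E → ℝ} (hφ : ConvexOn ℝ s φ)
    {y z g : E} (hy : y ∈ s) (hz : z ∈ s) (hg : HasGradientAt φ g y) :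
    φ y - φ z ≤ inner ℝ g (y - z) := by
  set L : ℝ →ᵃ[ℝ] E := AffineMap.lineMap y z
  have hderiv : HasDerivAt (φ ∘ L) (inner ℝ g (z - y)) 0 := by
    have hφ' : HasFDerivAt φ (InnerProductSpace.toDual ℝ E g) (L 0) := by
      simpa [L] using hg.hasFDerivAt
    simpa using hφ'.comp_hasDerivAt 0 AffineMap.hasDerivAt_lineMap
  have hslope : inner ℝ g (z - y) ≤ φ z - φ y := by
    simpa [slope, L] using
      (hφ.comp_affineMap L).le_slope_of_hasDerivAt (by simpa [L]) (by simpa [L]) one_pos hderiv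
  rw [← neg_sub z y, inner_neg_right]
  linarith

lemma ConvexOn.map_inv_card_smul_sum_le {E : Type*} [AddCommGroup E] [Module ℝ E] {f : E → ℝ}
    (hf : ConvexOn ℝ Set.univ f) {ι : Type*} {s : Finset ι} (hs : s.Nonempty) (p : ι → E) :
    f ((#s : ℝ)⁻¹ • ∑ i ∈ s, p i) ≤ (#s : ℝ)⁻¹ * ∑ i ∈ s, f (p i) := by
  simpa [← smul_sum, ← mul_sum] using hf.map_sum_le (t := s) (w := fun _ => (#s : ℝ)⁻¹) (p := p)
    (fun _ _ => by positivity) (by simp [hs.card_ne_zero]) fun _ _ => Set.mem_univ _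

theorem div_add_sqrt_add_le_two_mul_sub_sqrt {δ a b : ℝ} (hδ : 0 ≤ δ) (ha : 0 ≤ a)
    (hb : 0 ≤ b) : b / (δ + √(a + b)) ≤ 2 * (√(a + b) - √a) := by
  have hmono : √a ≤ √(a + b) := Real.sqrt_le_sqrt (by linarith)
  have hdiff : b = (√(a + b) - √a) * (√(a + b) + √a) := by
    rw [mul_comm, ← sq_sub_sq, Real.sq_sqrt (by linarith), Real.sq_sqrt ha]; ring
  refine div_le_of_le_mul₀ (by positivity) (by linarith) ?_
  calc b = (√(a + b) - √a) * (√(a + b) + √a) := hdiff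
    _ ≤ (√(a + b) - √a) * (2 * (δ + √(a + b))) := by gcongr; linarith
    _ = 2 * (√(a + b) - √a) * (δ + √(a + b)) := by ring

theorem sum_div_add_sqrt_sum_le {b : ℕ → ℝ} (hb : ∀ n, 0 ≤ b n) {δ : ℝ} (hδ : 0 ≤ δ)
    (T : ℕ) :
    ∑ n ∈ range T, b n / (δ + √(∑ r ∈ range (n + 1), b r)) ≤ 2 * √(∑ n ∈ range T, b n) := by
  calc ∑ n ∈ range T, b n / (δ + √(∑ r ∈ range (n + 1), b r))
      ≤ ∑ n ∈ range T, 2 * (√(∑ r ∈ range (n + 1), b r) - √(∑ r ∈ range n, b r)) := by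
        gcongr with n
        rw [sum_range_succ]
        exact div_add_sqrt_add_le_two_mul_sub_sqrt hδ (sum_nonneg fun r _ => hb r) (hb n)
    _ = 2 * √(∑ n ∈ range T, b n) := by
        rw [← mul_sum, sum_range_sub (fun n => √(∑ r ∈ range n, b r))]
        simp

theorem sum_mul_sub_succ_le {a Δ : ℕ → ℝ} {D : ℝ} {T : ℕ} (ha : Monotone a) (ha₀ : 0 ≤ a 0)
    (hΔ₀ : ∀ n, 0 ≤ Δ n) (hΔ : ∀ n ≤ T, Δ n ≤ D) :
    ∑ n ∈ range (T + 1), a n * (Δ n - Δ (n + 1)) ≤ a 0 * Δ 0 + D * (a T - a 0) := by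
  -- Abel summation, carrying the boundary term `a T * Δ (T + 1)` through the induction
  suffices h : ∑ n ∈ range (T + 1), a n * (Δ n - Δ (n + 1)) + a T * Δ (T + 1)
      ≤ a 0 * Δ 0 + D * (a T - a 0) by
    linarith [mul_nonneg (ha₀.trans (ha (Nat.zero_le T))) (hΔ₀ (T + 1))]
  induction T with
  | zero => simp [mul_sub]
  | succ T ih =>
    have hstep : (a (T + 1) - a T) * Δ (T + 1) ≤ (a (T + 1) - a T) * D :=
      mul_le_mul_of_nonneg_left (hΔ _ le_rfl) (sub_nonneg.2 (ha T.le_succ))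
    have := ih fun n hn => hΔ n (hn.trans T.le_succ)
    rw [sum_range_succ]
    linarith

theorem sum_sqrt_le_sqrt_card_mul_sqrt {ι : Type*} (s : Finset ι) {c : ι → ℝ}
    (hc : ∀ i, 0 ≤ c i) : ∑ i ∈ s, √(c i) ≤ √(#s : ℝ) * √(∑ i ∈ s, c i) := by
  simpa using Real.sum_sqrt_mul_sqrt_le s (f := fun _ => 1) (fun _ => zero_le_one) hc

/-- The paper's `s_{t,j}` for a single coordinate, with steps counted from `0`. -/
noncomputable def prefixNorm (g : ℕ → ℝ) (n : ℕ) : ℝ := √(∑ r ∈ range (n + 1), g r ^ 2)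

lemma prefixNorm_nonneg (g : ℕ → ℝ) (n : ℕ) : 0 ≤ prefixNorm g n := Real.sqrt_nonneg _

lemma monotone_prefixNorm (g : ℕ → ℝ) : Monotone (prefixNorm g) := fun _ _ h =>
  Real.sqrt_le_sqrt <| sum_le_sum_of_subset_of_nonneg (range_subset_range.2 (by omega))
    fun _ _ _ => sq_nonneg _

lemma adagrad_step_eq {η a N g x x' xstar : ℝ} (hη : η ≠ 0) (ha : a ≠ 0)
    (hx' : x' = x - η * N / a * g) :
    N * g * (x - xstar) =
      a * ((x - xstar) ^ 2 - (x' - xstar) ^ 2) / (2 * η) + η / 2 * (N ^ 2 * g ^ 2 / a) := by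
  subst hx'
  field_simp
  ring

theorem adagrad_coord_regret_le {η δ D M xstar : ℝ} {T : ℕ} {x N g : ℕ → ℝ} (hη : 0 < η)
    (hδ : 0 < δ) (hstep : ∀ n ≤ T, x (n + 1) = x n - η * N n / (δ + prefixNorm g n) * g n)
    (hx : ∀ n ≤ T, |x n - xstar| ≤ D) (hN : ∀ n ≤ T, |N n| ≤ M) :
    ∑ n ∈ range (T + 1), N n * g n * (x n - xstar) ≤
      ((δ + prefixNorm g 0) * (x 0 - xstar) ^ 2 + D ^ 2 * prefixNorm g T) / (2 * η)
        + η * M ^ 2 * prefixNorm g T := by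
  set a : ℕ → ℝ := fun n => δ + prefixNorm g n
  have ha : ∀ n, 0 < a n := fun n => add_pos_of_pos_of_nonneg hδ (prefixNorm_nonneg g n)
  have htelescope : ∑ n ∈ range (T + 1), a n * ((x n - xstar) ^ 2 - (x (n + 1) - xstar) ^ 2)
      ≤ a 0 * (x 0 - xstar) ^ 2 + D ^ 2 * prefixNorm g T := by
    refine (sum_mul_sub_succ_le ((monotone_prefixNorm g).const_add δ) (ha 0).le
      (fun n => sq_nonneg _) fun n hn => sq_le_sq.2 ((hx n hn).trans (le_abs_self D))).trans ?_
    have := prefixNorm_nonneg g 0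
    gcongr
    linarith
  have hadaptive : ∑ n ∈ range (T + 1), N n ^ 2 * g n ^ 2 / a n ≤ M ^ 2 * (2 * prefixNorm g T) :=
    calc ∑ n ∈ range (T + 1), N n ^ 2 * g n ^ 2 / a n
        ≤ ∑ n ∈ range (T + 1), M ^ 2 * (g n ^ 2 / a n) := by
          gcongr with n hn
          rw [mul_div_assoc]
          exact mul_le_mul_of_nonneg_right
            (sq_le_sq.2 ((hN n (Nat.lt_succ_iff.1 (mem_range.1 hn))).trans (le_abs_self M)))
            (div_nonneg (sq_nonneg _) (ha n).le)
      _ ≤ M ^ 2 * (2 * prefixNorm g T) := by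
          rw [← mul_sum]
          gcongr
          exact sum_div_add_sqrt_sum_le (fun n => sq_nonneg (g n)) hδ.le (T + 1)
  calc ∑ n ∈ range (T + 1), N n * g n * (x n - xstar)
      = (∑ n ∈ range (T + 1), a n * ((x n - xstar) ^ 2 - (x (n + 1) - xstar) ^ 2)) / (2 * η)
          + η / 2 * ∑ n ∈ range (T + 1), N n ^ 2 * g n ^ 2 / a n := by
        rw [sum_div, mul_sum, ← sum_add_distrib]
        refine sum_congr rfl fun n hn => adagrad_step_eq hη.ne' (ha n).ne' ?_
        exact hstep n (Nat.lt_succ_iff.1 (mem_range.1 hn))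
    _ ≤ (a 0 * (x 0 - xstar) ^ 2 + D ^ 2 * prefixNorm g T) / (2 * η)
          + η / 2 * (M ^ 2 * (2 * prefixNorm g T)) := by gcongr
    _ = _ := by ring

theorem adagrad_coord_regret_le_of_fin {η δ D M xstar : ℝ} {T : ℕ} {x : ℕ → ℝ}
    {N g s : Fin (T + 1) → ℝ} (hη : 0 < η) (hδ : 0 < δ)
    (hs : ∀ t, s t = √(∑ r ∈ Iic t, g r ^ 2))
    (hstep : ∀ t : Fin (T + 1), x (t + 1) = x t - η * N t / (δ + s t) * g t)
    (hx : ∀ n ≤ T, |x n - xstar| ≤ D) (hN : ∀ t, |N t| ≤ M) :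
    ∑ t, N t * g t * (x t - xstar) ≤
      ((δ + s 0) * (x 0 - xstar) ^ 2 + D ^ 2 * s (Fin.last T)) / (2 * η)
        + η * M ^ 2 * s (Fin.last T) := by
  set gseq : ℕ → ℝ := extend Fin.val g 0
  set Nseq : ℕ → ℝ := extend Fin.val N 0
  have hgseq (t : Fin (T + 1)) : gseq t = g t := Fin.val_injective.extend_apply g 0 t
  have hNseq (t : Fin (T + 1)) : Nseq t = N t := Fin.val_injective.extend_apply N 0 t
  have hs' (t : Fin (T + 1)) : s t = prefixNorm gseq t := by
    rw [hs, prefixNorm, Nat.range_succ_eq_Iic, ← Fin.map_valEmbedding_Iic, sum_map]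
    simp [hgseq]
  have key := adagrad_coord_regret_le (x := x) (N := Nseq) (g := gseq) (xstar := xstar) hη hδ
    (fun n hn => by
      have := hstep ⟨n, by omega⟩
      rwa [← hgseq, ← hNseq, hs'] at this)
    hx
    (fun n hn => by
      have := hN ⟨n, by omega⟩
      rwa [← hNseq] at this)
  rw [← Fin.sum_univ_eq_sum_range (fun n => Nseq n * gseq n * (x n - xstar))] at key
  simpa [hgseq, hNseq, hs'] using key

lemma blockNorm_sq {B : ℕ} {dsz : Fin B → ℕ} (i : Fin B)
    (v : EuclideanSpace ℝ ((i : Fin B) × Fin (dsz i))) :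
    blockNorm i v ^ 2 = ∑ j, v ⟨i, j⟩ ^ 2 :=
  Real.sq_sqrt (sum_nonneg fun _ _ => sq_nonneg _)

lemma sum_sq_div_blockNorm {B : ℕ} {dsz : Fin B → ℕ} {i : Fin B}
    {v : EuclideanSpace ℝ ((i : Fin B) × Fin (dsz i))} (hv : blockNorm i v ≠ 0) :
    ∑ j, (v ⟨i, j⟩ / blockNorm i v) ^ 2 = 1 := by
  simp_rw [div_pow, ← sum_div, ← blockNorm_sq]
  exact div_self (pow_ne_zero 2 hv)

section BlockNormalized

variable {B : ℕ} {dsz : Fin B → ℕ} {T : ℕ} {η δ D : ℝ} {M : Fin B → ℝ}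
  {x : ℕ → EuclideanSpace ℝ ((i : Fin B) × Fin (dsz i))}
  {G g : Fin T → EuclideanSpace ℝ ((i : Fin B) × Fin (dsz i))}
  {s : Fin T → ((i : Fin B) × Fin (dsz i)) → ℝ}
  {xstar : EuclideanSpace ℝ ((i : Fin B) × Fin (dsz i))}

lemma sum_block_sum_sq_eq (hg : ∀ t k, g t k = G t k / blockNorm k.1 (G t))
    (hG : ∀ t i, blockNorm i (G t) ≠ 0) (i : Fin B) : ∑ j, ∑ t, g t ⟨i, j⟩ ^ 2 = T := by
  rw [sum_comm]
  simp [hg, sum_sq_div_blockNorm (hG _ i)]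

lemma sum_block_rowNorm_le (hg : ∀ t k, g t k = G t k / blockNorm k.1 (G t))
    (hG : ∀ t i, blockNorm i (G t) ≠ 0) (i : Fin B) :
    ∑ j, √(∑ t, g t ⟨i, j⟩ ^ 2) ≤ √(dsz i) * √T := by
  simpa [sum_block_sum_sq_eq hg hG i] using
    sum_sqrt_le_sqrt_card_mul_sqrt univ (c := fun j : Fin (dsz i) => ∑ t, g t ⟨i, j⟩ ^ 2)
      fun j => sum_nonneg fun t _ => sq_nonneg _

lemma sum_rowNorm_le (hg : ∀ t k, g t k = G t k / blockNorm k.1 (G t))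
    (hG : ∀ t i, blockNorm i (G t) ≠ 0) :
    ∑ k, √(∑ t, g t k ^ 2) ≤ √(B * ∑ i, (dsz i : ℝ)) * √T :=
  calc ∑ k, √(∑ t, g t k ^ 2) = ∑ i, ∑ j, √(∑ t, g t ⟨i, j⟩ ^ 2) := Fintype.sum_sigma _
    _ ≤ ∑ i, √(dsz i) * √T := sum_le_sum fun i _ => sum_block_rowNorm_le hg hG i
    _ ≤ √(B * ∑ i, (dsz i : ℝ)) * √T := by
      rw [← sum_mul, Real.sqrt_mul (Nat.cast_nonneg B)]
      gcongr
      simpa using sum_sqrt_le_sqrt_card_mul_sqrt univ fun i => Nat.cast_nonneg (dsz i)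

theorem adagrad_bng_linear_regret_le (hT : 0 < T) (hη : 0 < η) (hδ : 0 < δ)
    (hg : ∀ t k, g t k = G t k / blockNorm k.1 (G t))
    (hs : ∀ t k, s t k = √(∑ r ∈ Iic t, g r k ^ 2))
    (hupd : ∀ (t : Fin T) k, x (t + 1) k = x t k - η * blockNorm k.1 (G t) / (δ + s t k) * g t k)
    (hG : ∀ t i, blockNorm i (G t) ≠ 0 ∧ blockNorm i (G t) ≤ M i)
    (hx : ∀ n ≤ T, ∀ k, |x n k - xstar k| ≤ D) :
    ∑ t, inner ℝ (G t) (x t - xstar) ≤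
      (∑ k, (δ + s ⟨0, hT⟩ k) * (x 0 k - xstar k) ^ 2) / (2 * η)
        + (D ^ 2 * √(B * ∑ i, (dsz i : ℝ)) / (2 * η) + ∑ i, η * M i ^ 2 * √(dsz i)) * √T := by
  obtain ⟨T, rfl⟩ := Nat.exists_eq_add_one_of_ne_zero hT.ne'
  have hS : ∀ k, s (Fin.last T) k = √(∑ t, g t k ^ 2) := fun k => by
    rw [hs, ← Fin.top_eq_last, Iic_top]
  have hrow := sum_block_rowNorm_le hg fun t i => (hG t i).1
  have hall := sum_rowNorm_le hg fun t i => (hG t i).1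
  simp only [← hS] at hrow hall
  have hcoord : ∀ k : (i : Fin B) × Fin (dsz i),
      ∑ t, blockNorm k.1 (G t) * g t k * (x t k - xstar k) ≤
        ((δ + s 0 k) * (x 0 k - xstar k) ^ 2 + D ^ 2 * s (Fin.last T) k) / (2 * η)
          + η * M k.1 ^ 2 * s (Fin.last T) k := fun k =>
    adagrad_coord_regret_le_of_fin hη hδ (fun t => hs t k) (fun t => hupd t k)
      (fun n hn => hx n (by omega) k)
      (fun t => (abs_of_nonneg (Real.sqrt_nonneg _)).trans_le (hG t k.1).2)
  calc ∑ t, inner ℝ (G t) (x t - xstar)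
      = ∑ k : (i : Fin B) × Fin (dsz i), ∑ t,
          blockNorm k.1 (G t) * g t k * (x t k - xstar k) := by
        rw [sum_comm]
        refine sum_congr rfl fun t _ => ?_
        simp only [PiLp.inner_apply, PiLp.sub_apply, Real.inner_apply]
        refine sum_congr rfl fun k _ => ?_
        rw [hg, mul_div_cancel₀ _ (hG t k.1).1, mul_comm]
    _ ≤ ∑ k : (i : Fin B) × Fin (dsz i),
          (((δ + s 0 k) * (x 0 k - xstar k) ^ 2 + D ^ 2 * s (Fin.last T) k) / (2 * η)
            + η * M k.1 ^ 2 * s (Fin.last T) k) := sum_le_sum fun k _ => hcoord k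
    _ = (∑ k, (δ + s 0 k) * (x 0 k - xstar k) ^ 2) / (2 * η)
          + D ^ 2 * (∑ k, s (Fin.last T) k) / (2 * η)
          + ∑ i, η * M i ^ 2 * ∑ j, s (Fin.last T) ⟨i, j⟩ := by
        simp only [add_div, sum_add_distrib, ← sum_div, ← mul_sum,
          Fintype.sum_sigma (fun k => η * M k.1 ^ 2 * s (Fin.last T) k)]
    _ ≤ (∑ k, (δ + s 0 k) * (x 0 k - xstar k) ^ 2) / (2 * η)
          + D ^ 2 * (√(B * ∑ i, (dsz i : ℝ)) * √((T + 1 : ℕ) : ℝ)) / (2 * η)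
          + ∑ i, η * M i ^ 2 * (√(dsz i) * √((T + 1 : ℕ) : ℝ)) := by
        gcongr with i
        exact hrow i
    _ = _ := by
        rw [Fin.zero_eta, add_mul, sum_mul]
        ring_nf

theorem adagrad_bng_regret_le (hT : 0 < T) (hη : 0 < η) (hδ : 0 < δ) {φ : Fin T → _ → ℝ}
    (hφ : ∀ t, ConvexOn ℝ Set.univ (φ t)) (hφG : ∀ t, HasGradientAt (φ t) (G t) (x t))
    (hg : ∀ t k, g t k = G t k / blockNorm k.1 (G t))
    (hs : ∀ t k, s t k = √(∑ r ∈ Iic t, g r k ^ 2))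
    (hupd : ∀ (t : Fin T) k, x (t + 1) k = x t k - η * blockNorm k.1 (G t) / (δ + s t k) * g t k)
    (hG : ∀ t i, blockNorm i (G t) ≠ 0 ∧ blockNorm i (G t) ≤ M i)
    (hx : ∀ n ≤ T, ∀ k, |x n k - xstar k| ≤ D) :
    ∑ t, (φ t (x t) - φ t xstar) ≤
      (∑ k, (δ + s ⟨0, hT⟩ k) * (x 0 k - xstar k) ^ 2) / (2 * η)
        + (D ^ 2 * √(B * ∑ i, (dsz i : ℝ)) / (2 * η) + ∑ i, η * M i ^ 2 * √(dsz i)) * √T :=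
  (sum_le_sum fun t _ => (hφ t).sub_le_inner_gradient (Set.mem_univ _) (Set.mem_univ _)
    (hφG t)).trans (adagrad_bng_linear_regret_le hT hη hδ hg hs hupd hG hx)

end BlockNormalized

lemma EuclideanSpace.measurable_iff_forall_apply {Ω ι : Type*} {m : MeasurableSpace Ω}
    {f : Ω → EuclideanSpace ℝ ι} : Measurable f ↔ ∀ i, Measurable fun ω => f ω i :=
  ⟨fun hf i => (measurable_pi_apply i).comp ((WithLp.measurable_ofLp 2 _).comp hf),
    fun h => (WithLp.measurable_toLp 2 _).comp (measurable_pi_iff.2 h)⟩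

namespace ProbabilityTheory

lemma iIndepFun.indepFun_of_measurable_iSup {Ω ι 𝒳 β : Type*} {mΩ : MeasurableSpace Ω}
    {μ : Measure Ω} {m𝒳 : MeasurableSpace 𝒳} [MeasurableSpace β] {ξ : ι → Ω → 𝒳}
    (hξ : ∀ i, Measurable (ξ i)) (hind : iIndepFun ξ μ) {S : Set ι} {t : ι} (ht : t ∉ S)
    {X : Ω → β} (hX : Measurable[⨆ r ∈ S, MeasurableSpace.comap (ξ r) m𝒳] X) :
    IndepFun X (ξ t) μ := by
  have h := indep_iSup_of_disjoint (fun r => (hξ r).comap_le) hind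
    (Set.disjoint_singleton_right.2 ht)
  rw [_root_.iSup_singleton] at h
  exact indep_of_indep_of_le_left h hX.comap_le

variable {Ω E 𝒳 : Type*} [MeasurableSpace Ω] {μ : Measure Ω} [IsProbabilityMeasure μ]
  [MeasurableSpace E] [MeasurableSpace 𝒳] {ν : Measure 𝒳}
  {F : E → 𝒳 → ℝ} {X : Ω → E} {Y : Ω → 𝒳}

lemma IndepFun.integrable_uncurry_prod (hF : Measurable (uncurry F)) (hX : Measurable X)
    (hY : Measurable Y) (hXY : IndepFun X Y μ) (hlaw : μ.map Y = ν)
    (hint : Integrable (fun ω => F (X ω) (Y ω)) μ) :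
    Integrable (uncurry F) ((μ.map X).prod ν) := by
  rw [← hlaw, ← (indepFun_iff_map_prod_eq_prod_map_map hX.aemeasurable hY.aemeasurable).1 hXY,
    integrable_map_measure hF.aestronglyMeasurable (hX.prodMk hY).aemeasurable]
  exact hint

lemma IndepFun.integrable_integral_comp [SFinite ν] (hF : Measurable (uncurry F))
    (hX : Measurable X) (hY : Measurable Y) (hXY : IndepFun X Y μ) (hlaw : μ.map Y = ν)
    (hint : Integrable (fun ω => F (X ω) (Y ω)) μ) :
    Integrable (fun ω => ∫ a, F (X ω) a ∂ν) μ := by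
  have h := (hXY.integrable_uncurry_prod hF hX hY hlaw hint).integral_prod_left
  exact (integrable_map_measure h.aestronglyMeasurable hX.aemeasurable).1 h

lemma IndepFun.integral_comp_eq_integral_integral [SFinite ν] (hF : Measurable (uncurry F))
    (hX : Measurable X) (hY : Measurable Y) (hXY : IndepFun X Y μ) (hlaw : μ.map Y = ν)
    (hint : Integrable (fun ω => F (X ω) (Y ω)) μ) :
    ∫ ω, F (X ω) (Y ω) ∂μ = ∫ ω, ∫ a, F (X ω) a ∂ν ∂μ := by
  have hprod := hXY.integrable_uncurry_prod hF hX hY hlaw hint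
  calc ∫ ω, F (X ω) (Y ω) ∂μ = ∫ p, uncurry F p ∂(μ.map fun ω => (X ω, Y ω)) :=
        (integral_map (hX.prodMk hY).aemeasurable hF.aestronglyMeasurable).symm
    _ = ∫ p, uncurry F p ∂((μ.map X).prod ν) := by
        rw [← hlaw, (indepFun_iff_map_prod_eq_prod_map_map hX.aemeasurable hY.aemeasurable).1 hXY]
    _ = ∫ y, ∫ a, F y a ∂ν ∂(μ.map X) := integral_prod _ hprod
    _ = ∫ ω, ∫ a, F (X ω) a ∂ν ∂μ :=
        integral_map hX.aemeasurable hprod.integral_prod_left.aestronglyMeasurable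

end ProbabilityTheory

section OnlineToBatch

variable {Ω E 𝒳 : Type*} [MeasurableSpace Ω] {μ : Measure Ω} [IsProbabilityMeasure μ]
  [AddCommGroup E] [Module ℝ E] [MeasurableSpace E] [MeasurableSpace 𝒳] {ν : Measure 𝒳}
  [IsProbabilityMeasure ν]

theorem integral_average_sub_le_of_regret_le {F : E → 𝒳 → ℝ}
    (hconv : ∀ a, ConvexOn ℝ Set.univ (F · a)) (hF : Measurable (uncurry F))
    (hFint : ∀ y, Integrable (F y) ν) {T : ℕ} (hT : 0 < T) {X : ℕ → Ω → E}
    {ξ : Fin T → Ω → 𝒳} (hX : ∀ t : Fin T, Measurable (X t)) (hξ : ∀ t, Measurable (ξ t))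
    (hindep : ∀ t : Fin T, IndepFun (X t) (ξ t) μ) (hlaw : ∀ t, μ.map (ξ t) = ν)
    (hint : ∀ t : Fin T, Integrable (fun ω => F (X t ω) (ξ t ω)) μ)
    (hintAvg : Integrable (fun ω => ∫ a, F ((T : ℝ)⁻¹ • ∑ t ∈ range T, X t ω) a ∂ν) μ)
    {y : E} {R : Ω → ℝ} (hR : Integrable R μ)
    (hregret : ∀ᵐ ω ∂μ, ∑ t : Fin T, (F (X t ω) (ξ t ω) - F y (ξ t ω)) ≤ R ω) :
    ∫ ω, (∫ a, F ((T : ℝ)⁻¹ • ∑ t ∈ range T, X t ω) a ∂ν - ∫ a, F y a ∂ν) ∂μ ≤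
      (T : ℝ)⁻¹ * ∫ ω, R ω ∂μ := by
  set f : E → ℝ := fun z => ∫ a, F z a ∂ν
  have hf : ConvexOn ℝ Set.univ f :=
    integral_convexOn_of_integrand_ae convex_univ (ae_of_all _ hconv) fun z _ => hFint z
  have hintf : ∀ t : Fin T, Integrable (fun ω => f (X t ω)) μ := fun t =>
    (hindep t).integrable_integral_comp hF (hX t) (hξ t) (hlaw t) (hint t)
  have hinty : ∀ t, Integrable (fun ω => F y (ξ t ω)) μ := fun t =>
    ((hlaw t).symm ▸ hFint y).comp_measurable (hξ t)
  have hstep : ∀ t : Fin T,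
      ∫ ω, (F (X t ω) (ξ t ω) - F y (ξ t ω)) ∂μ = ∫ ω, f (X t ω) ∂μ - f y := fun t => by
    have hy : ∫ ω, F y (ξ t ω) ∂μ = f y := by
      rw [← integral_map (hξ t).aemeasurable hF.of_uncurry_left.aestronglyMeasurable, hlaw t]
    rw [integral_sub (hint t) (hinty t), hy,
      (hindep t).integral_comp_eq_integral_integral hF (hX t) (hξ t) (hlaw t) (hint t)]
  have hjensen : ∀ ω, f ((T : ℝ)⁻¹ • ∑ t ∈ range T, X t ω) - f y ≤
      (T : ℝ)⁻¹ * ∑ t : Fin T, (f (X t ω) - f y) := fun ω => by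
    have := hf.map_inv_card_smul_sum_le (nonempty_range_iff.2 hT.ne') fun t => X t ω
    rw [card_range, ← Fin.sum_univ_eq_sum_range (fun t => f (X t ω))] at this
    rw [sum_sub_distrib, mul_sub]
    simpa [hT.ne'] using this
  calc ∫ ω, (f ((T : ℝ)⁻¹ • ∑ t ∈ range T, X t ω) - f y) ∂μ
      ≤ ∫ ω, (T : ℝ)⁻¹ * ∑ t : Fin T, (f (X t ω) - f y) ∂μ :=
        integral_mono (hintAvg.sub (integrable_const _))
          ((integrable_finsetSum _ fun t _ => (hintf t).sub (integrable_const _)).const_mul _)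
          hjensen
    _ = (T : ℝ)⁻¹ * ∫ ω, ∑ t : Fin T, (F (X t ω) (ξ t ω) - F y (ξ t ω)) ∂μ := by
        rw [integral_const_mul, integral_finsetSum (f := fun (t : Fin T) ω => f (X t ω) - f y) _
            fun t _ => (hintf t).sub (integrable_const _),
          integral_finsetSum (f := fun (t : Fin T) ω => F (X t ω) (ξ t ω) - F y (ξ t ω)) _
            fun t _ => (hint t).sub (hinty t)]
        simp [hstep, integral_sub (hintf _) (integrable_const _)]
    _ ≤ (T : ℝ)⁻¹ * ∫ ω, R ω ∂μ := mul_le_mul_of_nonneg_left (integral_mono_ae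
          (integrable_finsetSum _ fun t _ => (hint t).sub (hinty t)) hR hregret) (by positivity)

end OnlineToBatch

theorem adagrad_bng_expected_regret_second_general
    {Ω : Type*} [mΩ : MeasurableSpace Ω] (μ : Measure Ω) [IsProbabilityMeasure μ]
    {𝒳 : Type*} [m𝒳 : MeasurableSpace 𝒳] (ν : Measure 𝒳) [IsProbabilityMeasure ν]
    (B : ℕ) (dsz : Fin B → ℕ) (T : ℕ) (hT : 0 < T)
    (F : EuclideanSpace ℝ ((i : Fin B) × Fin (dsz i)) → 𝒳 → ℝ)
    (F' : EuclideanSpace ℝ ((i : Fin B) × Fin (dsz i)) → 𝒳 →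
      EuclideanSpace ℝ ((i : Fin B) × Fin (dsz i)))
    (hconv : ∀ a : 𝒳, ConvexOn ℝ Set.univ (fun y => F y a))
    (hgrad : ∀ (a : 𝒳) (y : EuclideanSpace ℝ ((i : Fin B) × Fin (dsz i))),
      HasGradientAt (fun z => F z a) (F' y a) y)
    (η δ : ℝ) (hη : 0 < η) (hδ : 0 < δ)
    -- the i.i.d. samples `ξ_1, …, ξ_T`, with common law `ν`
    (ξ : Fin T → Ω → 𝒳) (hξmeas : ∀ t, Measurable (ξ t))
    (hiid : iIndepFun ξ μ)
    (hident : ∀ t : Fin T, Measure.map (ξ t) μ = ν)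
    -- the iterates, block-normalized gradients and accumulated row norms
    (x : ℕ → Ω → EuclideanSpace ℝ ((i : Fin B) × Fin (dsz i)))
    (x₁ : EuclideanSpace ℝ ((i : Fin B) × Fin (dsz i)))
    (hx0 : ∀ ω, x 0 ω = x₁)
    (g : Fin T → Ω → EuclideanSpace ℝ ((i : Fin B) × Fin (dsz i)))
    (s : Fin T → Ω → ((i : Fin B) × Fin (dsz i)) → ℝ)
    (hg : ∀ (t : Fin T) (ω : Ω) (k : (i : Fin B) × Fin (dsz i)),
      g t ω k = F' (x t.val ω) (ξ t ω) k / blockNorm k.1 (F' (x t.val ω) (ξ t ω)))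
    (hs : ∀ (t : Fin T) (ω : Ω) (k : (i : Fin B) × Fin (dsz i)),
      s t ω k = Real.sqrt (∑ r ∈ Finset.Iic t, g r ω k ^ 2))
    (hupd : ∀ (t : Fin T) (ω : Ω) (k : (i : Fin B) × Fin (dsz i)),
      x (t.val + 1) ω k = x t.val ω k -
        (η * blockNorm k.1 (F' (x t.val ω) (ξ t ω)) / (δ + s t ω k)) * g t ω k)
    -- each iterate `x t` is a measurable function of the previous samples
    (hadapted : ∀ (t : Fin T) (k : (i : Fin B) × Fin (dsz i)),
      Measurable[⨆ r : Fin T, ⨆ _ : r < t, MeasurableSpace.comap (ξ r) m𝒳]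
        (fun ω => x t.val ω k))
    -- almost-sure bounds along the trajectory
    (M : Fin B → ℝ) (xstar : EuclideanSpace ℝ ((i : Fin B) × Fin (dsz i)))
    (Dinf : ℝ)
    (hAS : ∀ᵐ ω ∂μ,
      (∀ (t : Fin T) (i : Fin B),
        blockNorm i (F' (x t.val ω) (ξ t ω)) ≠ 0 ∧
        blockNorm i (F' (x t.val ω) (ξ t ω)) ≤ M i) ∧
      (∀ t ≤ T, ∀ k : (i : Fin B) × Fin (dsz i), |x t ω k - xstar k| ≤ Dinf))
    -- regularity conditions making all the expectations well defined
    (hFmeas : ∀ y, Measurable (fun a => F y a))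
    (hFint : ∀ y, Integrable (fun a => F y a) ν)
    (hintAvg : Integrable (fun ω =>
      ∫ a, F ((T : ℝ)⁻¹ • ∑ t ∈ Finset.range T, x t ω) a ∂ν) μ)
    (hintIter : ∀ t : Fin T, Integrable (fun ω => F (x t.val ω) (ξ t ω)) μ)
    (hintH1 : Integrable (fun ω =>
      ∑ k : (i : Fin B) × Fin (dsz i),
        (δ + s ⟨0, hT⟩ ω k) * (x₁ k - xstar k) ^ 2) μ) :
    ∫ ω, ((∫ a, F ((T : ℝ)⁻¹ • ∑ t ∈ Finset.range T, x t ω) a ∂ν)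
        - ∫ a, F xstar a ∂ν) ∂μ ≤
      (∫ ω, ∑ k : (i : Fin B) × Fin (dsz i),
          (δ + s ⟨0, hT⟩ ω k) * (x₁ k - xstar k) ^ 2 ∂μ) / (2 * η * T)
      + Dinf ^ 2 * Real.sqrt ((B : ℝ) * ∑ i : Fin B, (dsz i : ℝ))
          / (2 * η * Real.sqrt T)
      + ∑ i : Fin B, η * M i ^ 2 * Real.sqrt (dsz i) / Real.sqrt T := by
  have hF : Measurable (uncurry F) := measurable_uncurry_of_continuous_of_measurable
    (fun a => continuous_iff_continuousAt.2 fun y => (hgrad a y).continuousAt) hFmeas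
  have hpast : ∀ t : Fin T,
      Measurable[⨆ r : Fin T, ⨆ _ : r < t, MeasurableSpace.comap (ξ r) m𝒳] (x t) := fun t =>
    EuclideanSpace.measurable_iff_forall_apply.2 (hadapted t)
  have hxmeas : ∀ t : Fin T, Measurable (x t) := fun t =>
    (hpast t).mono (iSup₂_le fun r _ => (hξmeas r).comap_le) le_rfl
  set H : Ω → ℝ := fun ω => ∑ k, (δ + s ⟨0, hT⟩ ω k) * (x₁ k - xstar k) ^ 2
  set C := Dinf ^ 2 * √(B * ∑ i, (dsz i : ℝ)) / (2 * η) + ∑ i, η * M i ^ 2 * √(dsz i)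
  have hregret : ∀ᵐ ω ∂μ,
      ∑ t : Fin T, (F (x t ω) (ξ t ω) - F xstar (ξ t ω)) ≤ H ω / (2 * η) + C * √T := by
    filter_upwards [hAS] with ω ⟨hG, hD⟩
    have := adagrad_bng_regret_le hT hη hδ (fun t => hconv (ξ t ω)) (fun t => hgrad _ _)
      (fun t k => hg t ω k) (fun t k => hs t ω k) (fun t k => hupd t ω k) hG hD
    rwa [hx0] at this
  calc _ ≤ (T : ℝ)⁻¹ * ∫ ω, (H ω / (2 * η) + C * √T) ∂μ :=
        integral_average_sub_le_of_regret_le hconv hF hFint hT hxmeas hξmeas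
          (fun t => hiid.indepFun_of_measurable_iSup hξmeas (lt_irrefl t) (hpast t)) hident
          hintIter hintAvg ((hintH1.div_const _).add (integrable_const _)) hregret
    _ = _ := by
        rw [integral_add (hintH1.div_const _) (integrable_const _), integral_div, integral_const,
          probReal_univ, one_smul, ← sum_div]
        simp only [C]
        have hsq : √(T : ℝ) ^ 2 = T := Real.sq_sqrt (Nat.cast_nonneg T)
        have hpos : 0 < √(T : ℝ) := Real.sqrt_pos.2 (by exact_mod_cast hT)
        generalize √(T : ℝ) = u at hsq hpos ⊢
        rw [← hsq]
        field_simp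
        ring

/-- **AdaGradBNG convergence (Theorem 1, second inequality).**
`F (·) a` is convex and differentiable with gradient `F' y a` at every `y`, and
`f y = E_{a∼ν}[F y a]`.  The samples `ξ 0, …, ξ (T-1)` (representing
`ξ_1, …, ξ_T`) are i.i.d. with common distribution `ν` on a probability space
`(Ω, μ)`.  The iterates are indexed by `t = 0, …, T` (so `x 0 = x₁` is the
deterministic initial point), `g t` is the block-normalized stochastic gradient,
`s t k = ‖g_{1:t,k}‖₂`, `H_t = δ I + diag (s t)`, and
`x (t+1) = x t − τ_t ∘ g t` with `τ_t ⟨i,j⟩ = η ‖F_i'(x_t,ξ_t)‖₂/(δ + s_t ⟨i,j⟩)`;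
each `x t` is measurable with respect to the σ-algebra generated by
`ξ_1, …, ξ_{t-1}`.  Almost surely all block gradients along the trajectory are
nonzero with `‖F_i'(x_t,ξ_t)‖₂ ≤ M i` and `‖x_t − x*‖_∞ ≤ D∞`.  Then the average
iterate `x̄_T = (1/T) ∑_{t=1}^T x_t` satisfies
`E[f(x̄_T) − f(x*)] ≤ E[‖x₁ − x*‖²_{H_1}]/(2ηT) + D∞²√(Bd)/(2η√T)
  + ∑_i η M_i² √(d_i)/√T`. -/
theorem adagrad_bng_expected_regret_second
    {Ω : Type*} [mΩ : MeasurableSpace Ω] (μ : Measure Ω) [IsProbabilityMeasure μ]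
    {𝒳 : Type*} [m𝒳 : MeasurableSpace 𝒳] (ν : Measure 𝒳) [IsProbabilityMeasure ν]
    (B : ℕ) (dsz : Fin B → ℕ) (T : ℕ) (hT : 0 < T)
    (F : EuclideanSpace ℝ ((i : Fin B) × Fin (dsz i)) → 𝒳 → ℝ)
    (F' : EuclideanSpace ℝ ((i : Fin B) × Fin (dsz i)) → 𝒳 →
      EuclideanSpace ℝ ((i : Fin B) × Fin (dsz i)))
    (hconv : ∀ a : 𝒳, ConvexOn ℝ Set.univ (fun y => F y a))
    (hgrad : ∀ (a : 𝒳) (y : EuclideanSpace ℝ ((i : Fin B) × Fin (dsz i))),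
      HasGradientAt (fun z => F z a) (F' y a) y)
    (η δ : ℝ) (hη : 0 < η) (hδ : 0 < δ)
    -- the i.i.d. samples `ξ_1, …, ξ_T`, with common law `ν`
    (ξ : Fin T → Ω → 𝒳) (hξmeas : ∀ t, Measurable (ξ t))
    (hiid : iIndepFun ξ μ)
    (hident : ∀ t : Fin T, Measure.map (ξ t) μ = ν)
    -- the iterates, block-normalized gradients and accumulated row norms
    (x : ℕ → Ω → EuclideanSpace ℝ ((i : Fin B) × Fin (dsz i)))
    (x₁ : EuclideanSpace ℝ ((i : Fin B) × Fin (dsz i)))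
    (hx0 : ∀ ω, x 0 ω = x₁)
    (g : Fin T → Ω → EuclideanSpace ℝ ((i : Fin B) × Fin (dsz i)))
    (s : Fin T → Ω → ((i : Fin B) × Fin (dsz i)) → ℝ)
    (hg : ∀ (t : Fin T) (ω : Ω) (k : (i : Fin B) × Fin (dsz i)),
      g t ω k = F' (x t.val ω) (ξ t ω) k / blockNorm k.1 (F' (x t.val ω) (ξ t ω)))
    (hs : ∀ (t : Fin T) (ω : Ω) (k : (i : Fin B) × Fin (dsz i)),
      s t ω k = Real.sqrt (∑ r ∈ Finset.Iic t, g r ω k ^ 2))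
    (hupd : ∀ (t : Fin T) (ω : Ω) (k : (i : Fin B) × Fin (dsz i)),
      x (t.val + 1) ω k = x t.val ω k -
        (η * blockNorm k.1 (F' (x t.val ω) (ξ t ω)) / (δ + s t ω k)) * g t ω k)
    -- each iterate `x t` is a measurable function of the previous samples
    (hadapted : ∀ (t : Fin T) (k : (i : Fin B) × Fin (dsz i)),
      Measurable[⨆ r : Fin T, ⨆ _ : r < t, MeasurableSpace.comap (ξ r) m𝒳]
        (fun ω => x t.val ω k))
    -- almost-sure bounds along the trajectory
    (M : Fin B → ℝ) (xstar : EuclideanSpace ℝ ((i : Fin B) × Fin (dsz i)))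
    (Dinf : ℝ) (hDinf : 0 < Dinf)
    (hAS : ∀ᵐ ω ∂μ,
      (∀ (t : Fin T) (i : Fin B),
        blockNorm i (F' (x t.val ω) (ξ t ω)) ≠ 0 ∧
        blockNorm i (F' (x t.val ω) (ξ t ω)) ≤ M i) ∧
      (∀ t ≤ T, ∀ k : (i : Fin B) × Fin (dsz i), |x t ω k - xstar k| ≤ Dinf))
    -- regularity conditions making all the expectations well defined
    (hFmeas : ∀ y, Measurable (fun a => F y a))
    (hFint : ∀ y, Integrable (fun a => F y a) ν)
    (hintAvg : Integrable (fun ω =>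
      ∫ a, F ((T : ℝ)⁻¹ • ∑ t ∈ Finset.range T, x t ω) a ∂ν) μ)
    (hintIter : ∀ t : Fin T, Integrable (fun ω => F (x t.val ω) (ξ t ω)) μ)
    (hintH1 : Integrable (fun ω =>
      ∑ k : (i : Fin B) × Fin (dsz i),
        (δ + s ⟨0, hT⟩ ω k) * (x₁ k - xstar k) ^ 2) μ)
    (hintRow : ∀ i : Fin B, Integrable (fun ω =>
      ∑ j : Fin (dsz i), Real.sqrt (∑ t : Fin T, g t ω ⟨i, j⟩ ^ 2)) μ) :
    ∫ ω, ((∫ a, F ((T : ℝ)⁻¹ • ∑ t ∈ Finset.range T, x t ω) a ∂ν)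
        - ∫ a, F xstar a ∂ν) ∂μ ≤
      (∫ ω, ∑ k : (i : Fin B) × Fin (dsz i),
          (δ + s ⟨0, hT⟩ ω k) * (x₁ k - xstar k) ^ 2 ∂μ) / (2 * η * T)
      + Dinf ^ 2 * Real.sqrt ((B : ℝ) * ∑ i : Fin B, (dsz i : ℝ))
          / (2 * η * Real.sqrt T)
      + ∑ i : Fin B, η * M i ^ 2 * Real.sqrt (dsz i) / Real.sqrt T :=
  adagrad_bng_expected_regret_second_general (mΩ := mΩ) μ (m𝒳 := m𝒳) ν B dsz T hT F F' hconv hgrad η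
    δ hη hδ ξ hξmeas hiid hident x x₁ hx0 g s hg hs hupd hadapted M xstar Dinf hAS hFmeas hFint
    hintAvg hintIter hintH1
end

section
/- Deterministic regret bound for AdaGradBNG (pathwise form of Theorem 1, first inequality). Fix any realization of the samples ξ_1,…,ξ_T and run the AdaGrad with Block-Normalized Gradient updates with parameters η > 0, δ > 0. Suppose each function F(·,ξ_t) is convex and differentiable, every block gradient F_i'(x_t,ξ_t) is nonzero with ‖F_i'(x_t,ξ_t)‖₂ ≤ M_i for all t and i, and ‖x_t − x*‖_∞ ≤ D_∞ for all t, for a fixed point x* ∈ R^d. Then (1/T)∑_{t=1}^T [F(x_t,ξ_t) − F(x*,ξ_t)] ≤ ‖x_1 − x*‖²_{H_1}/(2ηT) + D_∞²√(Bd)/(2η√T) + ∑_{i=1}^B (η M_i²/T) · ∑_{j = d_1+…+d_{i−1}+1}^{d_1+…+d_i} ‖g_{1:T,j}‖₂. -/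
open Finset

theorem ConvexOn.apply_sub_le_of_hasFDerivAt {E : Type*} [NormedAddCommGroup E] [NormedSpace ℝ E]
    {f : E → ℝ} {f' : E →L[ℝ] ℝ} {p : E} (hf : ConvexOn ℝ Set.univ f) (hd : HasFDerivAt f f' p)
    (q : E) : f' (q - p) ≤ f q - f p := by
  have hline : HasDerivAt (f ∘ AffineMap.lineMap (k := ℝ) p q) (f' (q - p)) 0 := by
    refine HasFDerivAt.comp_hasDerivAt (0 : ℝ) ?_ AffineMap.hasDerivAt_lineMap
    simpa using hd
  have hconv : ConvexOn ℝ Set.univ (f ∘ AffineMap.lineMap (k := ℝ) p q) := by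
    simpa using hf.comp_affineMap (AffineMap.lineMap p q)
  simpa [slope_def_field] using
    hconv.le_slope_of_hasDerivAt (Set.mem_univ 0) (Set.mem_univ 1) one_pos hline

theorem ConvexOn.inner_sub_le_of_hasGradientAt {E : Type*} [NormedAddCommGroup E]
    [InnerProductSpace ℝ E] [CompleteSpace E] {f : E → ℝ} {G p : E}
    (hf : ConvexOn ℝ Set.univ f) (hG : HasGradientAt f G p) (q : E) :
    inner ℝ G (q - p) ≤ f q - f p := by
  simpa using hf.apply_sub_le_of_hasFDerivAt hG.hasFDerivAt q

theorem ConvexOn.sub_le_sum_mul_of_hasGradientAt {ι : Type*} [Fintype ι]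
    {f : EuclideanSpace ℝ ι → ℝ} {G p : EuclideanSpace ℝ ι} (hf : ConvexOn ℝ Set.univ f)
    (hG : HasGradientAt f G p) (q : EuclideanSpace ℝ ι) :
    f p - f q ≤ ∑ k, G k * (p k - q k) := by
  have h := hf.inner_sub_le_of_hasGradientAt hG q
  have hinner : inner ℝ G (q - p) = -∑ k, G k * (p k - q k) := by
    simp [PiLp.inner_apply, ← sum_neg_distrib, mul_comm, ← mul_neg]
  linarith

theorem Finset.sum_sqrt_le_sqrt_card_mul_sum {ι : Type*} (s : Finset ι) {c : ι → ℝ}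
    (hc : ∀ i ∈ s, 0 ≤ c i) : ∑ i ∈ s, √(c i) ≤ √(#s * ∑ i ∈ s, c i) := by
  apply Real.le_sqrt_of_sq_le
  calc (∑ i ∈ s, √(c i)) ^ 2 ≤ #s * ∑ i ∈ s, √(c i) ^ 2 := sq_sum_le_card_mul_sum_sq
    _ = #s * ∑ i ∈ s, c i := by
      rw [sum_congr rfl fun i hi => Real.sq_sqrt (hc i hi)]

theorem sum_range_succ_mul_sub_eq (P d : ℕ → ℝ) (n : ℕ) :
    ∑ t ∈ range (n + 1), P t * (d t - d (t + 1)) =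
      P 0 * d 0 + ∑ t ∈ range n, (P (t + 1) - P t) * d (t + 1) - P n * d (n + 1) := by
  induction n with
  | zero => simp [mul_sub]
  | succ n ih => rw [sum_range_succ, ih, sum_range_succ]; ring

theorem sum_range_succ_mul_sub_le {P d : ℕ → ℝ} {D : ℝ} (n : ℕ) (hP : Monotone P)
    (hPn : 0 ≤ P n) (hdn : 0 ≤ d (n + 1)) (hd : ∀ t ≤ n, d t ≤ D) :
    ∑ t ∈ range (n + 1), P t * (d t - d (t + 1)) ≤ P 0 * d 0 + D * (P n - P 0) := by
  have hinc : ∑ t ∈ range n, (P (t + 1) - P t) * d (t + 1) ≤ (P n - P 0) * D := by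
    rw [← sum_range_sub, sum_mul]
    refine sum_le_sum fun t ht => mul_le_mul_of_nonneg_left ?_ (sub_nonneg.2 (hP t.le_succ))
    exact hd _ (mem_range.1 ht)
  rw [sum_range_succ_mul_sub_eq]
  nlinarith [mul_nonneg hPn hdn]

/-- `rootSumSq (fun t => g t k) n` is the paper's `‖g_{1:n,k}‖₂`. -/
noncomputable def rootSumSq (a : ℕ → ℝ) (n : ℕ) : ℝ := √(∑ t ∈ range n, a t ^ 2)

theorem rootSumSq_nonneg (a : ℕ → ℝ) (n : ℕ) : 0 ≤ rootSumSq a n := Real.sqrt_nonneg _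

theorem rootSumSq_mono (a : ℕ → ℝ) : Monotone (rootSumSq a) := fun _ _ h =>
  Real.sqrt_le_sqrt (sum_le_sum_of_subset_of_nonneg (range_mono h) fun _ _ _ => sq_nonneg _)

theorem sq_div_add_rootSumSq_succ_le (a : ℕ → ℝ) {δ : ℝ} (hδ : 0 ≤ δ) (t : ℕ) :
    a t ^ 2 / (δ + rootSumSq a (t + 1)) ≤ 2 * (rootSumSq a (t + 1) - rootSumSq a t) := by
  set v := rootSumSq a (t + 1)
  set w := rootSumSq a t
  have hw : 0 ≤ w := rootSumSq_nonneg a t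
  have hwv : w ≤ v := rootSumSq_mono a t.le_succ
  have hsq : v ^ 2 = w ^ 2 + a t ^ 2 := by
    simp only [v, w, rootSumSq, sum_range_succ]
    rw [Real.sq_sqrt (by positivity), Real.sq_sqrt (by positivity)]
  refine div_le_of_le_mul₀ (by linarith) (by linarith) ?_
  nlinarith [mul_nonneg (sub_nonneg.2 hwv) (by linarith : 0 ≤ 2 * δ + v - w)]

theorem sum_sq_div_add_rootSumSq_le (a : ℕ → ℝ) {δ : ℝ} (hδ : 0 ≤ δ) (n : ℕ) :
    ∑ t ∈ range n, a t ^ 2 / (δ + rootSumSq a (t + 1)) ≤ 2 * rootSumSq a n := by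
  calc ∑ t ∈ range n, a t ^ 2 / (δ + rootSumSq a (t + 1))
      ≤ ∑ t ∈ range n, 2 * (rootSumSq a (t + 1) - rootSumSq a t) :=
        sum_le_sum fun t _ => sq_div_add_rootSumSq_succ_le a hδ t
    _ = 2 * rootSumSq a n := by
        rw [← mul_sum, sum_range_sub]; simp [rootSumSq]

theorem sum_rootSumSq_le {ι : Type*} [Fintype ι] (g : ℕ → ι → ℝ) {c : ℝ} {T : ℕ}
    (hg : ∀ t < T, ∑ k, g t k ^ 2 = c) :
    ∑ k, rootSumSq (fun t => g t k) T ≤ √(Fintype.card ι * c) * √T := by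
  have hsq : ∑ k, ∑ t ∈ range T, g t k ^ 2 = c * T := by
    rw [sum_comm, sum_congr rfl fun t ht => hg t (mem_range.1 ht)]
    simp [mul_comm]
  calc ∑ k, rootSumSq (fun t => g t k) T ≤ √(#univ * ∑ k, ∑ t ∈ range T, g t k ^ 2) :=
        sum_sqrt_le_sqrt_card_mul_sum _ fun _ _ => sum_nonneg fun _ _ => sq_nonneg _
    _ = √(Fintype.card ι * c) * √T := by
        rw [hsq, card_univ, ← mul_assoc, Real.sqrt_mul' _ (Nat.cast_nonneg T)]

theorem mul_sub_eq_of_eq_sub_div_mul {y y' c G P η : ℝ} (hP : P ≠ 0) (hη : η ≠ 0)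
    (h : y' = y - η / P * G) :
    G * (y - c) = P / (2 * η) * ((y - c) ^ 2 - (y' - c) ^ 2) + η / (2 * P) * G ^ 2 := by
  subst h
  field_simp
  ring

theorem adagrad_coordinate_regret_le {η δ D M c : ℝ} {a N y : ℕ → ℝ} {T : ℕ}
    (hη : 0 < η) (hδ : 0 < δ) (hT : 0 < T)
    (hupd : ∀ t < T, y (t + 1) = y t - η * N t / (δ + rootSumSq a (t + 1)) * a t)
    (hN : ∀ t < T, |N t| ≤ M) (hy : ∀ t ≤ T, |y t - c| ≤ D) :
    ∑ t ∈ range T, N t * a t * (y t - c) ≤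
      (δ + rootSumSq a 1) * (y 0 - c) ^ 2 / (2 * η)
        + (D ^ 2 / (2 * η) + η * M ^ 2) * rootSumSq a T := by
  obtain ⟨n, rfl⟩ := Nat.exists_eq_add_one_of_ne_zero hT.ne'
  obtain ⟨P, hP_def⟩ : ∃ P : ℕ → ℝ, ∀ t, P t = δ + rootSumSq a (t + 1) := ⟨_, fun _ => rfl⟩
  obtain ⟨d, hd_def⟩ : ∃ d : ℕ → ℝ, ∀ t, d t = (y t - c) ^ 2 := ⟨_, fun _ => rfl⟩
  have hP : ∀ t, 0 < P t := fun t => hP_def t ▸ add_pos_of_pos_of_nonneg hδ (rootSumSq_nonneg a _)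
  have hstep : ∀ t < n + 1, N t * a t * (y t - c) =
      P t / (2 * η) * (d t - d (t + 1)) + η / (2 * P t) * (N t * a t) ^ 2 := fun t ht => by
    rw [hd_def, hd_def]
    exact mul_sub_eq_of_eq_sub_div_mul (hP t).ne' hη.ne' (by rw [hupd t ht, hP_def]; ring)
  have hgrad : ∀ t < n + 1,
      η / (2 * P t) * (N t * a t) ^ 2 ≤ η / 2 * M ^ 2 * (a t ^ 2 / P t) := by
    intro t ht
    have hNM : N t ^ 2 ≤ M ^ 2 :=
      (sq_abs _).symm.trans_le (pow_le_pow_left₀ (abs_nonneg _) (hN t ht) 2)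
    have hPt := hP t
    calc η / (2 * P t) * (N t * a t) ^ 2 = η / 2 * N t ^ 2 * (a t ^ 2 / P t) := by ring
      _ ≤ η / 2 * M ^ 2 * (a t ^ 2 / P t) := by gcongr
  have habel : ∑ t ∈ range (n + 1), P t * (d t - d (t + 1)) ≤
      P 0 * d 0 + D ^ 2 * rootSumSq a (n + 1) := by
    have hPmono : Monotone P := fun u v huv => by
      simp only [hP_def]
      gcongr
      exact rootSumSq_mono a (by omega)
    have hdD : ∀ t ≤ n, d t ≤ D ^ 2 := fun t ht => hd_def t ▸
      (sq_abs _).symm.trans_le (pow_le_pow_left₀ (abs_nonneg _) (hy t (by omega)) 2)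
    have hPinc : P n - P 0 ≤ rootSumSq a (n + 1) := by
      rw [hP_def, hP_def]
      linarith [rootSumSq_nonneg a 1]
    refine (sum_range_succ_mul_sub_le n hPmono (hP n).le (hd_def _ ▸ sq_nonneg _) hdD).trans ?_
    gcongr
  have hsum : ∑ t ∈ range (n + 1), a t ^ 2 / P t ≤ 2 * rootSumSq a (n + 1) := by
    simpa only [hP_def] using sum_sq_div_add_rootSumSq_le a hδ.le (n + 1)
  calc ∑ t ∈ range (n + 1), N t * a t * (y t - c)
      ≤ ∑ t ∈ range (n + 1),
          (P t / (2 * η) * (d t - d (t + 1)) + η / 2 * M ^ 2 * (a t ^ 2 / P t)) :=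
        sum_le_sum fun t ht => (hstep t (mem_range.1 ht)).trans_le
          (add_le_add le_rfl (hgrad t (mem_range.1 ht)))
    _ = (∑ t ∈ range (n + 1), P t * (d t - d (t + 1))) / (2 * η)
          + η / 2 * M ^ 2 * ∑ t ∈ range (n + 1), a t ^ 2 / P t := by
        rw [sum_add_distrib, sum_div, mul_sum]
        congr 1
        exact sum_congr rfl fun t _ => by ring
    _ ≤ (P 0 * d 0 + D ^ 2 * rootSumSq a (n + 1)) / (2 * η)
          + η / 2 * M ^ 2 * (2 * rootSumSq a (n + 1)) := by
        gcongr
    _ = _ := by rw [hP_def, hd_def]; ring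

theorem adagrad_regret_le_sum_coordinate {ι : Type*} [Fintype ι]
    {f : ℕ → EuclideanSpace ℝ ι → ℝ} {G x : ℕ → EuclideanSpace ℝ ι} {xstar : EuclideanSpace ℝ ι}
    {g N : ℕ → ι → ℝ} {M : ι → ℝ} {η δ D : ℝ} {T : ℕ} (hη : 0 < η) (hδ : 0 < δ) (hT : 0 < T)
    (hconv : ∀ t < T, ConvexOn ℝ Set.univ (f t)) (hgrad : ∀ t < T, HasGradientAt (f t) (G t) (x t))
    (hG : ∀ t < T, ∀ k, G t k = N t k * g t k)
    (hupd : ∀ t < T, ∀ k,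
      x (t + 1) k = x t k - η * N t k / (δ + rootSumSq (fun r => g r k) (t + 1)) * g t k)
    (hN : ∀ t < T, ∀ k, |N t k| ≤ M k) (hx : ∀ t ≤ T, ∀ k, |x t k - xstar k| ≤ D) :
    ∑ t ∈ range T, (f t (x t) - f t xstar) ≤
      ∑ k, ((δ + rootSumSq (fun t => g t k) 1) * (x 0 k - xstar k) ^ 2 / (2 * η)
        + (D ^ 2 / (2 * η) + η * M k ^ 2) * rootSumSq (fun t => g t k) T) :=
  calc ∑ t ∈ range T, (f t (x t) - f t xstar)
      ≤ ∑ t ∈ range T, ∑ k, N t k * g t k * (x t k - xstar k) :=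
        sum_le_sum fun t ht => ((hconv t (mem_range.1 ht)).sub_le_sum_mul_of_hasGradientAt
          (hgrad t (mem_range.1 ht)) xstar).trans_eq
            (sum_congr rfl fun k _ => by rw [hG t (mem_range.1 ht) k])
    _ = ∑ k, ∑ t ∈ range T, N t k * g t k * (x t k - xstar k) := sum_comm
    _ ≤ _ := sum_le_sum fun k _ => adagrad_coordinate_regret_le hη hδ hT
        (fun t ht => hupd t ht k) (fun t ht => hN t ht k) (fun t ht => hx t ht k)

theorem sum_sq_div_blockNorm_eq {B : ℕ} {dsz : Fin B → ℕ}
    (v : EuclideanSpace ℝ ((i : Fin B) × Fin (dsz i))) (hv : ∀ i, blockNorm i v ≠ 0) :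
    ∑ k, (v k / blockNorm k.1 v) ^ 2 = B := by
  have hblock : ∀ i, ∑ j : Fin (dsz i), (v ⟨i, j⟩ / blockNorm i v) ^ 2 = 1 := by
    intro i
    have hsq : blockNorm i v ^ 2 = ∑ j : Fin (dsz i), v ⟨i, j⟩ ^ 2 :=
      Real.sq_sqrt (sum_nonneg fun _ _ => sq_nonneg _)
    simp only [div_pow, ← sum_div, ← hsq]
    exact div_self (pow_ne_zero 2 (hv i))
  simp [Fintype.sum_sigma, hblock]

-- Iteration `t` here is iteration `t + 1` of the paper: `x 0` is `x_1` and `s 0` gives `H_1`.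
theorem adagrad_bng_pathwise_regret_first_general (B : ℕ) (dsz : Fin B → ℕ)
    (𝒳 : Type*) (T : ℕ) (hT : 0 < T) (ξ : ℕ → 𝒳)
    (F : EuclideanSpace ℝ ((i : Fin B) × Fin (dsz i)) → 𝒳 → ℝ)
    (F' : EuclideanSpace ℝ ((i : Fin B) × Fin (dsz i)) → 𝒳 →
      EuclideanSpace ℝ ((i : Fin B) × Fin (dsz i)))
    (hconv : ∀ t < T, ConvexOn ℝ Set.univ (fun y => F y (ξ t)))
    (hgrad : ∀ t < T, ∀ y, HasGradientAt (fun z => F z (ξ t)) (F' y (ξ t)) y)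
    (η δ : ℝ) (hη : 0 < η) (hδ : 0 < δ)
    (x : ℕ → EuclideanSpace ℝ ((i : Fin B) × Fin (dsz i)))
    (g : ℕ → EuclideanSpace ℝ ((i : Fin B) × Fin (dsz i)))
    (s : ℕ → ((i : Fin B) × Fin (dsz i)) → ℝ)
    (hg : ∀ t < T, ∀ k : (i : Fin B) × Fin (dsz i),
      g t k = F' (x t) (ξ t) k / blockNorm k.1 (F' (x t) (ξ t)))
    (hs : ∀ t < T, ∀ k : (i : Fin B) × Fin (dsz i),
      s t k = Real.sqrt (∑ r ∈ Finset.range (t + 1), g r k ^ 2))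
    (hupd : ∀ t < T, ∀ k : (i : Fin B) × Fin (dsz i),
      x (t + 1) k = x t k -
        (η * blockNorm k.1 (F' (x t) (ξ t)) / (δ + s t k)) * g t k)
    (M : Fin B → ℝ) (xstar : EuclideanSpace ℝ ((i : Fin B) × Fin (dsz i)))
    (Dinf : ℝ)
    (hnz : ∀ t < T, ∀ i : Fin B, blockNorm i (F' (x t) (ξ t)) ≠ 0)
    (hM : ∀ t < T, ∀ i : Fin B, blockNorm i (F' (x t) (ξ t)) ≤ M i)
    (hD : ∀ t ≤ T, ∀ k : (i : Fin B) × Fin (dsz i), |x t k - xstar k| ≤ Dinf) :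
    (1 / (T : ℝ)) * ∑ t ∈ Finset.range T, (F (x t) (ξ t) - F xstar (ξ t)) ≤
      (∑ k : (i : Fin B) × Fin (dsz i), (δ + s 0 k) * (x 0 k - xstar k) ^ 2)
        / (2 * η * T)
      + Dinf ^ 2 * Real.sqrt ((B : ℝ) * ∑ i : Fin B, (dsz i : ℝ))
          / (2 * η * Real.sqrt T)
      + ∑ i : Fin B, (η * M i ^ 2 / T) *
          ∑ j : Fin (dsz i), Real.sqrt (∑ t ∈ Finset.range T, g t ⟨i, j⟩ ^ 2) := by
  have hT' : (0 : ℝ) < T := Nat.cast_pos.2 hT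
  set S := fun k => rootSumSq (fun t => g t k) T
  have hreg := adagrad_regret_le_sum_coordinate (f := fun t y => F y (ξ t))
    (g := fun t k => g t k) (N := fun t k => blockNorm k.1 (F' (x t) (ξ t))) (M := fun k => M k.1)
    hη hδ hT hconv
    (fun t ht => hgrad t ht (x t))
    (fun t ht k => by rw [hg t ht k, mul_div_cancel₀ _ (hnz t ht k.1)])
    (fun t ht k => by rw [hupd t ht k, hs t ht k]; rfl)
    (fun t ht k => (abs_of_nonneg (Real.sqrt_nonneg _)).trans_le (hM t ht k.1)) hD
  have hs0 : ∀ k, rootSumSq (fun t => g t k) 1 = s 0 k := fun k => (hs 0 hT k).symm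
  simp only [hs0] at hreg
  have hCS : ∑ k, S k ≤ √((B : ℝ) * ∑ i, (dsz i : ℝ)) * √T := by
    refine (sum_rootSumSq_le (fun t k => g t k) (c := B) fun t ht => ?_).trans_eq ?_
    · simp_rw [hg t ht]
      exact sum_sq_div_blockNorm_eq _ (hnz t ht)
    · simp [Fintype.card_sigma, mul_comm]
  calc (1 / (T : ℝ)) * ∑ t ∈ range T, (F (x t) (ξ t) - F xstar (ξ t))
      ≤ (1 / T) * ∑ k, ((δ + s 0 k) * (x 0 k - xstar k) ^ 2 / (2 * η)
          + (Dinf ^ 2 / (2 * η) + η * M k.1 ^ 2) * S k) :=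
        mul_le_mul_of_nonneg_left hreg (by positivity)
    _ = ∑ k, ((δ + s 0 k) * (x 0 k - xstar k) ^ 2 / (2 * η * T)
          + Dinf ^ 2 / (2 * η * T) * S k + η * M k.1 ^ 2 / T * S k) := by
        rw [mul_sum]
        exact sum_congr rfl fun k _ => by field_simp; ring
    _ = (∑ k, (δ + s 0 k) * (x 0 k - xstar k) ^ 2) / (2 * η * T)
          + Dinf ^ 2 / (2 * η * T) * ∑ k, S k + ∑ i, (η * M i ^ 2 / T) * ∑ j, S ⟨i, j⟩ := by
        simp only [sum_add_distrib, ← sum_div, ← mul_sum, Fintype.sum_sigma]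
    _ ≤ _ := by
        refine add_le_add (add_le_add le_rfl ?_) le_rfl
        calc Dinf ^ 2 / (2 * η * T) * ∑ k, S k
            ≤ Dinf ^ 2 / (2 * η * T) * (√((B : ℝ) * ∑ i, (dsz i : ℝ)) * √T) := by gcongr
          _ = _ := by
            field_simp
            rw [Real.sq_sqrt hT'.le]
            ring

/-- **Deterministic regret bound for AdaGrad with Block-Normalized Gradient**
(pathwise form of Theorem 1, first inequality).

Iterations are indexed by `t = 0, 1, …, T-1` (corresponding to `t = 1, …, T` in the
paper), so `x 0` is the initial point `x_1`, `ξ t` is the fixed realization of the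
`t`-th sample, `F' y a` is the gradient of the convex differentiable function
`F (·) a` at `y`, `g t` is the block-normalized gradient at iteration `t`,
`s t k = ‖g_{1:t,k}‖₂` collects the row norms, `H_t = δ I + diag (s t)`, and the
update is `x (t+1) = x t − τ_t ∘ g t` with
`τ_t ⟨i,j⟩ = η ‖F_i'(x_t,ξ_t)‖₂ / (δ + s_t ⟨i,j⟩)`.  Assuming every block gradient
along the trajectory is nonzero with `‖F_i'(x_t,ξ_t)‖₂ ≤ M i` and
`‖x_t − x*‖_∞ ≤ D∞`, the average regret is bounded by
`‖x_1 − x*‖²_{H_1}/(2ηT) + D∞²√(Bd)/(2η√T)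
  + ∑_i (η M_i²/T) ∑_{j ∈ block i} ‖g_{1:T,j}‖₂`. -/
theorem adagrad_bng_pathwise_regret_first (B : ℕ) (dsz : Fin B → ℕ)
    (𝒳 : Type*) (T : ℕ) (hT : 0 < T) (ξ : ℕ → 𝒳)
    (F : EuclideanSpace ℝ ((i : Fin B) × Fin (dsz i)) → 𝒳 → ℝ)
    (F' : EuclideanSpace ℝ ((i : Fin B) × Fin (dsz i)) → 𝒳 →
      EuclideanSpace ℝ ((i : Fin B) × Fin (dsz i)))
    (hconv : ∀ t < T, ConvexOn ℝ Set.univ (fun y => F y (ξ t)))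
    (hgrad : ∀ t < T, ∀ y, HasGradientAt (fun z => F z (ξ t)) (F' y (ξ t)) y)
    (η δ : ℝ) (hη : 0 < η) (hδ : 0 < δ)
    (x : ℕ → EuclideanSpace ℝ ((i : Fin B) × Fin (dsz i)))
    (g : ℕ → EuclideanSpace ℝ ((i : Fin B) × Fin (dsz i)))
    (s : ℕ → ((i : Fin B) × Fin (dsz i)) → ℝ)
    (hg : ∀ t < T, ∀ k : (i : Fin B) × Fin (dsz i),
      g t k = F' (x t) (ξ t) k / blockNorm k.1 (F' (x t) (ξ t)))
    (hs : ∀ t < T, ∀ k : (i : Fin B) × Fin (dsz i),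
      s t k = Real.sqrt (∑ r ∈ Finset.range (t + 1), g r k ^ 2))
    (hupd : ∀ t < T, ∀ k : (i : Fin B) × Fin (dsz i),
      x (t + 1) k = x t k -
        (η * blockNorm k.1 (F' (x t) (ξ t)) / (δ + s t k)) * g t k)
    (M : Fin B → ℝ) (xstar : EuclideanSpace ℝ ((i : Fin B) × Fin (dsz i)))
    (Dinf : ℝ) (hDinf : 0 < Dinf)
    (hnz : ∀ t < T, ∀ i : Fin B, blockNorm i (F' (x t) (ξ t)) ≠ 0)
    (hM : ∀ t < T, ∀ i : Fin B, blockNorm i (F' (x t) (ξ t)) ≤ M i)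
    (hD : ∀ t ≤ T, ∀ k : (i : Fin B) × Fin (dsz i), |x t k - xstar k| ≤ Dinf) :
    (1 / (T : ℝ)) * ∑ t ∈ Finset.range T, (F (x t) (ξ t) - F xstar (ξ t)) ≤
      (∑ k : (i : Fin B) × Fin (dsz i), (δ + s 0 k) * (x 0 k - xstar k) ^ 2)
        / (2 * η * T)
      + Dinf ^ 2 * Real.sqrt ((B : ℝ) * ∑ i : Fin B, (dsz i : ℝ))
          / (2 * η * Real.sqrt T)
      + ∑ i : Fin B, (η * M i ^ 2 / T) *
          ∑ j : Fin (dsz i), Real.sqrt (∑ t ∈ Finset.range T, g t ⟨i, j⟩ ^ 2) :=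
  adagrad_bng_pathwise_regret_first_general B dsz 𝒳 T hT ξ F F' hconv hgrad η δ hη hδ x g s hg hs
    hupd M xstar Dinf hnz hM hD
end

section
/- AdaGrad summation lemma (inequality (3) used in the proof of Theorem 1). Let δ > 0 and let a_1,…,a_T be real numbers. Then ∑_{t=1}^T a_t² / (δ + √(∑_{s=1}^t a_s²)) ≤ 2 √(∑_{t=1}^T a_t²). -/
/-! Since `b = (√(x + b) - √x) (√(x + b) + √x) ≤ 2 (√(x + b) - √x) √(x + b)`, each summand is at most
twice the increment of `√` along the partial sums, and these increments telescope. -/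

open Finset Real

theorem div_add_sqrt_le_two_mul_sqrt_sub {δ x b : ℝ} (hδ : 0 ≤ δ) (hx : 0 ≤ x) (hb : 0 ≤ b) :
    b / (δ + √(x + b)) ≤ 2 * (√(x + b) - √x) := by
  have hmono : √x ≤ √(x + b) := sqrt_le_sqrt (by linarith)
  have hdiff : b = (√(x + b) - √x) * (√(x + b) + √x) := by
    linear_combination sq_sqrt hx - sq_sqrt (add_nonneg hx hb)
  refine div_le_of_le_mul₀ (by positivity) (by linarith) ?_
  calc b = (√(x + b) - √x) * (√(x + b) + √x) := hdiff
    _ ≤ (√(x + b) - √x) * (2 * (δ + √(x + b))) := by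
        gcongr
        linarith
    _ = 2 * (√(x + b) - √x) * (δ + √(x + b)) := by ring

theorem sum_div_add_sqrt_partial_sum_le {δ : ℝ} (hδ : 0 ≤ δ) {b : ℕ → ℝ} (hb : ∀ t, 0 ≤ b t)
    (T : ℕ) :
    ∑ t ∈ range T, b t / (δ + √(∑ s ∈ range (t + 1), b s)) ≤ 2 * √(∑ t ∈ range T, b t) :=
  calc ∑ t ∈ range T, b t / (δ + √(∑ s ∈ range (t + 1), b s))
      ≤ ∑ t ∈ range T, 2 * (√(∑ s ∈ range (t + 1), b s) - √(∑ s ∈ range t, b s)) := by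
        gcongr with t
        rw [sum_range_succ]
        exact div_add_sqrt_le_two_mul_sqrt_sub hδ (sum_nonneg fun s _ => hb s) (hb t)
    _ = 2 * √(∑ t ∈ range T, b t) := by
        rw [← mul_sum, sum_range_sub (fun t => √(∑ s ∈ range t, b s))]
        simp

/-- **AdaGrad summation lemma** (inequality (3) in the proof of Theorem 1 of
"Training Deep Neural Networks via Block-Normalized Gradient").
For `δ > 0` and real numbers `a 0, …, a (T-1)` (representing `a_1, …, a_T`),
`∑_{t=1}^T a_t² / (δ + √(∑_{s=1}^t a_s²)) ≤ 2 √(∑_{t=1}^T a_t²)`. -/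
theorem adagrad_summation_lemma (T : ℕ) (δ : ℝ) (hδ : 0 < δ) (a : ℕ → ℝ) :
    ∑ t ∈ Finset.range T,
        a t ^ 2 / (δ + Real.sqrt (∑ s ∈ Finset.range (t + 1), a s ^ 2))
      ≤ 2 * Real.sqrt (∑ t ∈ Finset.range T, a t ^ 2) :=
  sum_div_add_sqrt_partial_sum_le hδ.le (fun t => sq_nonneg (a t)) T
end
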